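/- Let G be the geometric graph of ℝ² with vertices u₁ = (2,2), u₂ = (0,0), u₃ = (2,0), u₄ = (0,2), u₅ = (1,1) and edges (u₁,u₄), (u₁,u₅), (u₂,u₃), (u₂,u₅), and let H be the geometric graph of ℝ² with vertices v₁ = (0,0), v₂ = (2,2), v₃ = (0,2), v₄ = (2,0), v₅ = (1,1) and edges (v₁,v₃), (v₁,v₅), (v₂,v₄), (v₂,v₅). Then for all cost coefficients C_V > 0, C_E > 0, GGD(G,H) > 0. (Since GMD(G,H) = 0 for these two graphs, the GGD is not stable with respect to the GMD.) -/

import Mathlib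

open scoped BigOperators

noncomputable section

/-- An inexact matching between a geometric graph with vertices indexed by
`Fin m` and one with vertices indexed by `Fin n`, encoded as a function
`π : Fin m → Option (Fin n)`: `π i = none` means the vertex `u_i` is deleted
(matched to the dummy vertex `ε_V`), and the matching restricts to a bijection
between the non-deleted vertices, i.e. `π` is injective on the indices mapped
to `some` values; a vertex `v_j` of `H` not in the image is deleted
(`π⁻¹(v_j) = ε_V`). -/
def IsMatching {m n : ℕ} (π : Fin m → Option (Fin n)) : Prop :=
  ∀ ⦃i i' : Fin m⦄ ⦃j : Fin n⦄, π i = some j → π i' = some j → i = i'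

/-- The cost of an inexact matching `π` between the geometric graph `G` with
vertex positions `u : Fin m → X` and edge set `EG` and the geometric graph `H`
with vertex positions `v : Fin n → X` and edge set `EH`:
the sum of the vertex-translation costs `C_V·|u − π(u)|` over non-deleted
vertices, the edge-translation costs `C_E·||e| − |π(e)||` over edges of `G`
whose endpoints are matched to the endpoints of an edge of `H`, and the
edge-deletion costs `C_E·|e|`, resp. `C_E·|f|`, over the remaining edges of
`G`, resp. of `H`. -/
def matchCost {X : Type*} [MetricSpace X] {m n : ℕ}
    (u : Fin m → X) (EG : Finset (Fin m × Fin m))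
    (v : Fin n → X) (EH : Finset (Fin n × Fin n))
    (CV CE : ℝ) (π : Fin m → Option (Fin n)) : ℝ :=
  (∑ i : Fin m, Option.elim (π i) 0 fun j => CV * dist (u i) (v j)) +
  (∑ e ∈ EG,
    match π e.1, π e.2 with
    | some j₁, some j₂ =>
        if (j₁, j₂) ∈ EH then CE * |dist (u e.1) (u e.2) - dist (v j₁) (v j₂)|
        else CE * dist (u e.1) (u e.2)
    | _, _ => CE * dist (u e.1) (u e.2)) +
  (∑ f ∈ EH,
    if ∃ i₁ i₂ : Fin m, π i₁ = some f.1 ∧ π i₂ = some f.2 ∧ (i₁, i₂) ∈ EG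
    then 0 else CE * dist (v f.1) (v f.2))

/-- The geometric graph distance: the least cost of an inexact matching
between the two geometric graphs. -/
def GGD {X : Type*} [MetricSpace X] {m n : ℕ}
    (u : Fin m → X) (EG : Finset (Fin m × Fin m))
    (v : Fin n → X) (EH : Finset (Fin n × Fin n))
    (CV CE : ℝ) : ℝ :=
  sInf { c : ℝ | ∃ π : Fin m → Option (Fin n),
    IsMatching π ∧ c = matchCost u EG v EH CV CE π }

/-- A point of the Euclidean plane `ℝ²`. -/
def pt (a b : ℝ) : EuclideanSpace ℝ (Fin 2) := WithLp.toLp 2 ![a, b]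

/-- The vertex sequence `u₁ = (2,2), u₂ = (0,0), u₃ = (2,0), u₄ = (0,2),
u₅ = (1,1)` of `G`. -/
def uG : Fin 5 → EuclideanSpace ℝ (Fin 2) := ![pt 2 2, pt 0 0, pt 2 0, pt 0 2, pt 1 1]

/-- The edge set `(u₁,u₄), (u₁,u₅), (u₂,u₃), (u₂,u₅)` of `G`. -/
def edgesG : Finset (Fin 5 × Fin 5) := {(0, 3), (0, 4), (1, 2), (1, 4)}

/-- The vertex sequence `v₁ = (0,0), v₂ = (2,2), v₃ = (0,2), v₄ = (2,0),
v₅ = (1,1)` of `H`. -/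
def vH : Fin 5 → EuclideanSpace ℝ (Fin 2) := ![pt 0 0, pt 2 2, pt 0 2, pt 2 0, pt 1 1]

/-- The edge set `(v₁,v₃), (v₁,v₅), (v₂,v₄), (v₂,v₅)` of `H`. -/
def edgesH : Finset (Fin 5 × Fin 5) := {(0, 2), (0, 4), (1, 3), (1, 4)}

/-! A matching either carries some edge of `G` onto the edge `f = (v₁, v₃)` of `H`, and since no
edge of `G` lies exactly at the position of `f` one of its endpoints pays a positive translation
cost, or it deletes `f` and pays `C_E·|f| > 0`. There are finitely many matchings, so the infimum
defining the GGD is attained and hence positive. -/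

section

variable {X : Type*} [MetricSpace X] {m n : ℕ} {u : Fin m → X} {EG : Finset (Fin m × Fin m)}
  {v : Fin n → X} {EH : Finset (Fin n × Fin n)} {CV CE : ℝ}

variable (u EG v EH CV CE) in
theorem exists_isMatching_GGD_eq :
    ∃ π, IsMatching π ∧ GGD u EG v EH CV CE = matchCost u EG v EH CV CE π := by
  have hne : { c : ℝ | ∃ π, IsMatching π ∧ c = matchCost u EG v EH CV CE π }.Nonempty :=
    ⟨_, fun _ => none, fun _ _ _ h => by simp at h, rfl⟩
  have hfin : { c : ℝ | ∃ π, IsMatching π ∧ c = matchCost u EG v EH CV CE π }.Finite :=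
    (Set.finite_range (matchCost u EG v EH CV CE)).subset fun _ ⟨π, _, hc⟩ => ⟨π, hc.symm⟩
  exact hne.csInf_mem hfin

theorem le_matchCost_of_eq_some (hCV : 0 ≤ CV) (hCE : 0 ≤ CE) {π : Fin m → Option (Fin n)}
    {i : Fin m} {j : Fin n} (hij : π i = some j) :
    CV * dist (u i) (v j) ≤ matchCost u EG v EH CV CE π := by
  unfold matchCost
  refine le_add_of_le_of_nonneg (le_add_of_le_of_nonneg ?_ ?_) ?_
  · have hterm := Finset.single_le_sum
      (f := fun i => Option.elim (π i) 0 fun j => CV * dist (u i) (v j))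
      (fun i _ => by cases π i <;> simp only [Option.elim] <;> positivity) (Finset.mem_univ i)
    simpa only [hij, Option.elim] using hterm
  · exact Finset.sum_nonneg fun e _ => by split <;> (try split) <;> positivity
  · exact Finset.sum_nonneg fun f _ => by split <;> positivity

theorem le_matchCost_of_not_covered (hCV : 0 ≤ CV) (hCE : 0 ≤ CE) {π : Fin m → Option (Fin n)}
    {f : Fin n × Fin n} (hf : f ∈ EH)
    (hnc : ¬∃ i₁ i₂ : Fin m, π i₁ = some f.1 ∧ π i₂ = some f.2 ∧ (i₁, i₂) ∈ EG) :
    CE * dist (v f.1) (v f.2) ≤ matchCost u EG v EH CV CE π := by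
  unfold matchCost
  refine le_add_of_nonneg_of_le (add_nonneg ?_ ?_) ?_
  · exact Finset.sum_nonneg fun i _ => by cases π i <;> simp only [Option.elim] <;> positivity
  · exact Finset.sum_nonneg fun e _ => by split <;> (try split) <;> positivity
  · have hterm := Finset.single_le_sum
      (f := fun f => if ∃ i₁ i₂ : Fin m, π i₁ = some f.1 ∧ π i₂ = some f.2 ∧ (i₁, i₂) ∈ EG
        then 0 else CE * dist (v f.1) (v f.2))
      (fun f _ => by split <;> positivity) hf
    simpa only [if_neg hnc] using hterm

theorem matchCost_pos_of_edge_not_placed (hCV : 0 < CV) (hCE : 0 < CE)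
    (π : Fin m → Option (Fin n)) {f : Fin n × Fin n} (hf : f ∈ EH) (hlen : v f.1 ≠ v f.2)
    (hfree : ∀ e ∈ EG, (u e.1, u e.2) ≠ (v f.1, v f.2)) :
    0 < matchCost u EG v EH CV CE π := by
  by_cases hcov : ∃ i₁ i₂ : Fin m, π i₁ = some f.1 ∧ π i₂ = some f.2 ∧ (i₁, i₂) ∈ EG
  · obtain ⟨i₁, i₂, h₁, h₂, he⟩ := hcov
    obtain hne | hne : u i₁ ≠ v f.1 ∨ u i₂ ≠ v f.2 := by
      simpa only [ne_eq, Prod.mk.injEq, not_and_or] using hfree _ he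
    · exact (mul_pos hCV (dist_pos.2 hne)).trans_le (le_matchCost_of_eq_some hCV.le hCE.le h₁)
    · exact (mul_pos hCV (dist_pos.2 hne)).trans_le (le_matchCost_of_eq_some hCV.le hCE.le h₂)
  · exact (mul_pos hCE (dist_pos.2 hlen)).trans_le (le_matchCost_of_not_covered hCV.le hCE.le hf hcov)

theorem GGD_pos_of_edge_not_placed (hCV : 0 < CV) (hCE : 0 < CE) {f : Fin n × Fin n}
    (hf : f ∈ EH) (hlen : v f.1 ≠ v f.2) (hfree : ∀ e ∈ EG, (u e.1, u e.2) ≠ (v f.1, v f.2)) :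
    0 < GGD u EG v EH CV CE := by
  obtain ⟨π, -, hπ⟩ := exists_isMatching_GGD_eq u EG v EH CV CE
  exact hπ ▸ matchCost_pos_of_edge_not_placed hCV hCE π hf hlen hfree

end

theorem pt_inj {a b c d : ℝ} : pt a b = pt c d ↔ a = c ∧ b = d := by
  simp [pt]

/-- For the geometric graphs `G` and `H` of `ℝ²` above (for which
`GMD(G,H) = 0`) and all cost coefficients `C_V > 0`, `C_E > 0`, one has
`GGD(G,H) > 0`; so the GGD is not stable with respect to the GMD. -/
theorem ggd_pos_of_gmd_zero_example (CV CE : ℝ) (hCV : 0 < CV) (hCE : 0 < CE) :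
    0 < GGD uG edgesG vH edgesH CV CE := by
  refine GGD_pos_of_edge_not_placed (f := (0, 2)) hCV hCE (by decide) ?_ ?_
  · simp [vH, pt_inj]
  · simp [edgesG, uG, vH, pt_inj]
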